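/- Let λ ∈ ℂ and suppose the quartic surface {f0 + λ·q² = 0} in ℙ³(ℂ) has a singular point, i.e. there exists x ∈ ℂ⁴, x ≠ 0, at which all four partial derivatives of the polynomial f0 + λ·q² vanish. Then λ ∈ {−1, −1/2, −1/3, −1/4}. -/
import Mathlib
open MvPolynomial
noncomputable def q : MvPolynomial (Fin 4) ℂ := X 0 ^ 2 + X 1 ^ 2 + X 2 ^ 2 + X 3 ^ 2
noncomputable def f0 : MvPolynomial (Fin 4) ℂ := X 0 ^ 4 + X 1 ^ 4 + X 2 ^ 4 + X 3 ^ 4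

theorem stmt8 (lam : ℂ) (x : Fin 4 → ℂ) (hx : x ≠ 0)
    (hsing : ∀ i : Fin 4, eval x (pderiv i (f0 + C lam * q ^ 2)) = 0) :
    lam ∈ ({-1, -(1/2), -(1/3), -(1/4)} : Set ℂ) := by
  obtain ⟨s, hs⟩ : ∃ s : ℂ, s = x 0 ^ 2 + x 1 ^ 2 + x 2 ^ 2 + x 3 ^ 2 := ⟨_, rfl⟩
  have key0 : x 0 * (x 0 ^ 2 + lam * s) = 0 := by
    have h := hsing 0
    simp [f0, q, pderiv_X, pderiv_pow, pderiv_mul, Pi.single_apply] at h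
    linear_combination h / 4 + (x 0 * lam) * hs
  have key1 : x 1 * (x 1 ^ 2 + lam * s) = 0 := by
    have h := hsing 1
    simp [f0, q, pderiv_X, pderiv_pow, pderiv_mul, Pi.single_apply] at h
    linear_combination h / 4 + (x 1 * lam) * hs
  have key2 : x 2 * (x 2 ^ 2 + lam * s) = 0 := by
    have h := hsing 2
    simp [f0, q, pderiv_X, pderiv_pow, pderiv_mul, Pi.single_apply] at h
    linear_combination h / 4 + (x 2 * lam) * hs
  have key3 : x 3 * (x 3 ^ 2 + lam * s) = 0 := by
    have h := hsing 3
    simp [f0, q, pderiv_X, pderiv_pow, pderiv_mul, Pi.single_apply] at h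
    linear_combination h / 4 + (x 3 * lam) * hs
  -- s ≠ 0
  have hne : s ≠ 0 := by
    intro h0
    apply hx
    have z : ∀ i : Fin 4, x i * (x i ^ 2 + lam * s) = 0 := by
      intro i; fin_cases i <;> assumption
    funext i
    have hcube : x i ^ 3 = 0 := by
      have := z i; rw [h0] at this; linear_combination this
    exact pow_eq_zero_iff (by norm_num) |>.mp hcube
  -- each x i ^2 is 0 or -(lam*s)
  have hc0 : x 0 ^ 2 = 0 ∨ x 0 ^ 2 = -(lam * s) := by
    rcases mul_eq_zero.mp key0 with h | h
    · left; rw [h]; ring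
    · right; linear_combination h
  have hc1 : x 1 ^ 2 = 0 ∨ x 1 ^ 2 = -(lam * s) := by
    rcases mul_eq_zero.mp key1 with h | h
    · left; rw [h]; ring
    · right; linear_combination h
  have hc2 : x 2 ^ 2 = 0 ∨ x 2 ^ 2 = -(lam * s) := by
    rcases mul_eq_zero.mp key2 with h | h
    · left; rw [h]; ring
    · right; linear_combination h
  have hc3 : x 3 ^ 2 = 0 ∨ x 3 ^ 2 = -(lam * s) := by
    rcases mul_eq_zero.mp key3 with h | h
    · left; rw [h]; ring
    · right; linear_combination h
  have hprod : s * (s + lam * s) * (s + 2 * lam * s) * (s + 3 * lam * s) * (s + 4 * lam * s) = 0 := by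
    rcases hc0 with h0 | h0 <;> rcases hc1 with h1 | h1 <;> rcases hc2 with h2 | h2 <;>
      rcases hc3 with h3 | h3 <;>
    first
    | (have hm : s = 0 := by linear_combination hs + h0 + h1 + h2 + h3
       rw [hm]; ring)
    | (have hm : s + lam * s = 0 := by linear_combination hs + h0 + h1 + h2 + h3
       linear_combination (s * (s + 2*lam*s) * (s + 3*lam*s) * (s + 4*lam*s)) * hm)
    | (have hm : s + 2 * lam * s = 0 := by linear_combination hs + h0 + h1 + h2 + h3
       linear_combination (s * (s + lam*s) * (s + 3*lam*s) * (s + 4*lam*s)) * hm)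
    | (have hm : s + 3 * lam * s = 0 := by linear_combination hs + h0 + h1 + h2 + h3
       linear_combination (s * (s + lam*s) * (s + 2*lam*s) * (s + 4*lam*s)) * hm)
    | (have hm : s + 4 * lam * s = 0 := by linear_combination hs + h0 + h1 + h2 + h3
       linear_combination (s * (s + lam*s) * (s + 2*lam*s) * (s + 3*lam*s)) * hm)
  have hfac : (1 + lam) * (1 + 2*lam) * (1 + 3*lam) * (1 + 4*lam) = 0 := by
    have h5 : s ^ 5 * ((1 + lam) * (1 + 2*lam) * (1 + 3*lam) * (1 + 4*lam)) = 0 := by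
      linear_combination hprod
    rcases mul_eq_zero.mp h5 with h | h
    · exact absurd (pow_eq_zero_iff (by norm_num) |>.mp h) hne
    · exact h
  simp only [Set.mem_insert_iff, Set.mem_singleton_iff]
  rcases mul_eq_zero.mp hfac with h | h
  · rcases mul_eq_zero.mp h with h | h
    · rcases mul_eq_zero.mp h with h | h
      · left; linear_combination h
      · right; left; field_simp; linear_combination h
    · right; right; left; field_simp; linear_combination h
  · right; right; right; field_simp; linear_combination h
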